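/- The orthogonal group O(V,q) of V = F_3^5 with q(a) = a_0^2 - a_1^2 - ... - a_4^2 acts transitively on the set of crosses (sets of 5 mutually orthogonal antipodal pairs, one long and four short). -/
import Mathlib

abbrev V : Type := Fin 5 → ZMod 3

def q (a : V) : ZMod 3 := a 0 ^ 2 - a 1 ^ 2 - a 2 ^ 2 - a 3 ^ 2 - a 4 ^ 2

def b (x y : V) : ZMod 3 := x 0 * y 0 - x 1 * y 1 - x 2 * y 2 - x 3 * y 3 - x 4 * y 4

def orthPairs (s t : Finset V) : Prop := ∀ u ∈ s, ∀ w ∈ t, b u w = 0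

def IsLongPair (p : Finset V) : Prop := ∃ v : V, q v = 1 ∧ p = {v, -v}

def IsShortPair (p : Finset V) : Prop := ∃ v : V, q v = -1 ∧ p = {v, -v}

def IsCross (c : Finset (Finset V)) : Prop :=
  c.card = 5 ∧ (∀ p ∈ c, ∀ p' ∈ c, p ≠ p' → orthPairs p p') ∧
  ∃ p ∈ c, IsLongPair p ∧ ∀ p' ∈ c, p' ≠ p → IsShortPair p'

lemma cross_rep (c : Finset (Finset V)) (hc : IsCross c) :
    ∃ v : Fin 5 → V, q (v 0) = 1 ∧ (∀ i : Fin 5, i ≠ 0 → q (v i) = -1) ∧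
      (∀ i j : Fin 5, i ≠ j → b (v i) (v j) = 0) ∧
      c = Finset.image (fun i => ({v i, -(v i)} : Finset V)) Finset.univ := by
  obtain ⟨hcard, horth, p₀, hp₀, hlong, hshort⟩ := hc
  obtain ⟨v₀, hv₀q, hv₀p⟩ := hlong
  set c₁ := c.erase p₀ with hc₁def
  have hc₁card : c₁.card = 4 := by rw [hc₁def, Finset.card_erase_of_mem hp₀, hcard]
  let e : Fin 4 ≃ c₁ := (finCongr hc₁card.symm).trans c₁.equivFin.symm
  have hS : ∀ k : Fin 4, ∃ u : V, q u = -1 ∧ ((e k : Finset V) = {u, -u}) := by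
    intro k
    have hm : (e k : Finset V) ∈ c₁ := (e k).2
    have hm' := Finset.mem_erase.mp hm
    exact hshort _ (Finset.mem_of_mem_erase hm) hm'.1
  choose w hwq hwp using hS
  refine ⟨Fin.cons v₀ w, ?_, ?_, ?_, ?_⟩
  · simpa using hv₀q
  · intro i hi
    rcases Fin.eq_zero_or_eq_succ i with rfl | ⟨k, rfl⟩
    · exact absurd rfl hi
    · simpa using hwq k
  · -- orthogonality
    set P : Fin 5 → Finset V := Fin.cons p₀ (fun k => (e k : Finset V)) with hP
    have hPmem : ∀ i, P i ∈ c := by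
      intro i
      rcases Fin.eq_zero_or_eq_succ i with rfl | ⟨k, rfl⟩
      · simpa [hP] using hp₀
      · simp only [hP, Fin.cons_succ]
        exact Finset.mem_of_mem_erase (e k).2
    have hvmem : ∀ i, (Fin.cons v₀ w : Fin 5 → V) i ∈ P i := by
      intro i
      rcases Fin.eq_zero_or_eq_succ i with rfl | ⟨k, rfl⟩
      · simp [hP, hv₀p]
      · simp only [hP, Fin.cons_succ, hwp k]
        simp
    have hPne : ∀ i j : Fin 5, i ≠ j → P i ≠ P j := by
      have hne0 : ∀ k : Fin 4, (e k : Finset V) ≠ p₀ := fun k =>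
        (Finset.mem_erase.mp (e k).2).1
      intro i j hij
      rcases Fin.eq_zero_or_eq_succ i with rfl | ⟨k, rfl⟩ <;>
        rcases Fin.eq_zero_or_eq_succ j with rfl | ⟨l, rfl⟩
      · exact absurd rfl hij
      · simpa [hP] using (hne0 l).symm
      · simpa [hP] using hne0 k
      · simp only [hP, Fin.cons_succ]
        intro h
        exact hij (by rw [e.apply_eq_iff_eq.mp (Subtype.coe_injective h)])
    intro i j hij
    exact horth _ (hPmem i) _ (hPmem j) (hPne i j hij) _ (hvmem i) _ (hvmem j)
  · -- c = image
    apply Finset.Subset.antisymm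
    · intro p hp
      by_cases h : p = p₀
      · subst h
        refine Finset.mem_image.mpr ⟨0, Finset.mem_univ _, ?_⟩
        simp [hv₀p]
      · have hp1 : p ∈ c₁ := Finset.mem_erase.mpr ⟨h, hp⟩
        refine Finset.mem_image.mpr ⟨(e.symm ⟨p, hp1⟩).succ, Finset.mem_univ _, ?_⟩
        have := hwp (e.symm ⟨p, hp1⟩)
        rw [e.apply_symm_apply] at this
        simp only [Fin.cons_succ]
        exact this.symm
    · intro p hp
      obtain ⟨i, -, rfl⟩ := Finset.mem_image.mp hp
      rcases Fin.eq_zero_or_eq_succ i with rfl | ⟨k, rfl⟩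
      · simpa [hv₀p.symm] using hp₀
      · simp only [Fin.cons_succ, ← hwp k]
        exact Finset.mem_of_mem_erase (e k).2

def B : V →ₗ[ZMod 3] V →ₗ[ZMod 3] ZMod 3 :=
  LinearMap.mk₂ (ZMod 3) b
    (by intro x y z; simp [b]; ring)
    (by intro a x y; simp [b]; ring)
    (by intro x y z; simp [b]; ring)
    (by intro a x y; simp [b]; ring)

lemma B_self (x : V) : B x x = q x := by
  simp [B, LinearMap.mk₂_apply, b, q]; ring

lemma good_equiv (v : Fin 5 → V) (h0 : q (v 0) = 1) (h1 : ∀ i : Fin 5, i ≠ 0 → q (v i) = -1)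
    (hb : ∀ i j : Fin 5, i ≠ j → b (v i) (v j) = 0) :
    ∃ g : V ≃ₗ[ZMod 3] V, (∀ x, q (g x) = q x) ∧ ∀ i, g (Pi.single i 1) = v i := by
  have hqv : ∀ i, q (v i) ≠ 0 := by
    intro i
    by_cases hi : i = 0
    · subst hi; rw [h0]; exact one_ne_zero
    · rw [h1 i hi]; decide
  have hli : LinearIndependent (ZMod 3) v := by
    rw [Fintype.linearIndependent_iff]
    intro g hg j
    have : B (∑ i, g i • v i) (v j) = 0 := by rw [hg]; simp
    rw [map_sum] at this
    simp only [map_smul, smul_eq_mul, LinearMap.sum_apply, LinearMap.smul_apply] at this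
    rw [Finset.sum_eq_single j] at this
    · rw [B_self] at this
      exact (mul_eq_zero.mp this).resolve_right (hqv j)
    · intro i _ hij
      have : B (v i) (v j) = 0 := hb i j hij
      rw [this, mul_zero]
    · intro h; exact absurd (Finset.mem_univ j) h
  have hcard : Fintype.card (Fin 5) = Module.finrank (ZMod 3) V := by
    simp [Module.finrank_pi]
  let Bv := basisOfLinearIndependentOfCardEqFinrank hli hcard
  let g : V ≃ₗ[ZMod 3] V := (Pi.basisFun (ZMod 3) (Fin 5)).equiv Bv (Equiv.refl _)
  have hge : ∀ i, g (Pi.single i 1) = v i := by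
    intro i
    have h1 : (Pi.basisFun (ZMod 3) (Fin 5)) i = Pi.single i 1 := by
      ext j; simp [Pi.basisFun_apply, Pi.single_apply]
    have := Module.Basis.equiv_apply (Pi.basisFun (ZMod 3) (Fin 5)) i Bv (Equiv.refl _)
    rw [h1] at this
    simpa [Bv, coe_basisOfLinearIndependentOfCardEqFinrank] using this
  have hg : ∀ x : V, g x = ∑ i, x i • v i := by
    intro x
    have hx : x = ∑ i, Pi.single i (x i) := by
      ext j; simp [Finset.sum_apply, Pi.single_apply]
    conv_lhs => rw [hx]
    rw [map_sum]
    congr 1; ext i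
    have : (Pi.single i (x i) : V) = x i • (Pi.single i 1 : V) := by
      ext j; simp [Pi.single_apply, mul_comm]
    rw [this, map_smul, hge]
  refine ⟨g, ?_, hge⟩
  intro x
  rw [hg]
  have e1 : q (v 0) = 1 := h0
  have e2 : q (v 1) = -1 := h1 1 (by decide)
  have e3 : q (v 2) = -1 := h1 2 (by decide)
  have e4 : q (v 3) = -1 := h1 3 (by decide)
  have e5 : q (v 4) = -1 := h1 4 (by decide)
  have b01 := hb 0 1 (by decide); have b02 := hb 0 2 (by decide)
  have b03 := hb 0 3 (by decide); have b04 := hb 0 4 (by decide)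
  have b12 := hb 1 2 (by decide); have b13 := hb 1 3 (by decide)
  have b14 := hb 1 4 (by decide); have b23 := hb 2 3 (by decide)
  have b24 := hb 2 4 (by decide); have b34 := hb 3 4 (by decide)
  simp only [q, b] at e1 e2 e3 e4 e5 b01 b02 b03 b04 b12 b13 b14 b23 b24 b34 ⊢
  simp only [Finset.sum_apply, Pi.smul_apply, smul_eq_mul, Fin.sum_univ_five]
  linear_combination (x 0)^2 * e1 + (x 1)^2 * e2 + (x 2)^2 * e3 + (x 3)^2 * e4 + (x 4)^2 * e5 +
    (2 * x 0 * x 1) * b01 + (2 * x 0 * x 2) * b02 + (2 * x 0 * x 3) * b03 + (2 * x 0 * x 4) * b04 +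
    (2 * x 1 * x 2) * b12 + (2 * x 1 * x 3) * b13 + (2 * x 1 * x 4) * b14 +
    (2 * x 2 * x 3) * b23 + (2 * x 2 * x 4) * b24 + (2 * x 3 * x 4) * b34

noncomputable def stdv : Fin 5 → V := fun i => Pi.single i 1

noncomputable def stdCross : Finset (Finset V) :=
  Finset.image (fun i => ({stdv i, -(stdv i)} : Finset V)) Finset.univ

lemma key (c : Finset (Finset V)) (hc : IsCross c) :
    ∃ g : V ≃ₗ[ZMod 3] V, (∀ x, q (g x) = q x) ∧
      stdCross.image (fun p => p.image (⇑g)) = c := by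
  obtain ⟨v, h0, h1, hb, hcim⟩ := cross_rep c hc
  obtain ⟨g, hgq, hge⟩ := good_equiv v h0 h1 hb
  refine ⟨g, hgq, ?_⟩
  rw [stdCross, Finset.image_image, hcim]
  apply Finset.image_congr
  intro i _
  simp only [Function.comp_apply, Finset.image_insert, Finset.image_singleton, map_neg]
  rw [show g (stdv i) = v i from hge i]

theorem stmt9 (c c' : Finset (Finset V)) (hc : IsCross c) (hc' : IsCross c') :
    ∃ g : V ≃ₗ[ZMod 3] V, (∀ v, q (g v) = q v) ∧
      c.image (fun p => p.image (⇑g)) = c' := by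
  obtain ⟨g, hgq, hgim⟩ := key c hc
  obtain ⟨g', hgq', hgim'⟩ := key c' hc'
  refine ⟨g.symm.trans g', ?_, ?_⟩
  · intro x
    have h1 : q (g.symm x) = q x := by
      conv_rhs => rw [← g.apply_symm_apply x]
      rw [hgq]
    simp only [LinearEquiv.trans_apply]
    rw [hgq', h1]
  · rw [← hgim, Finset.image_image]
    rw [← hgim']
    apply Finset.image_congr
    intro p _
    simp only [Function.comp_apply, Finset.image_image]
    apply Finset.image_congr
    intro x _
    simp only [Function.comp_apply, LinearEquiv.trans_apply, LinearEquiv.symm_apply_apply]
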